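/- arXiv:1907.05221 — 2 statements merged into one kernel-verified Lean document; each statement's English description precedes it below -/
import Mathlib

section
/- (Commutator relation along C₋ and C₊.) Let U ⊆ ℝ² be open, α, β : U → ℝ be C¹ functions with sin(α − β) ≠ 0 on U, set 2A = α − β, ∂₊ = cos α ∂ₓ + sin α ∂_y, ∂₋ = cos β ∂ₓ + sin β ∂_y. Then for every C² function f : U → ℝ, at every point of U: ∂₋∂₊f − ∂₊∂₋f = (1/sin 2A)[(cos 2A · ∂₊β − ∂₋α) ∂₋f − (∂₊β − cos 2A · ∂₋α) ∂₊f]. -/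
/-!
Writing `∂_θ f = Df(e_θ)` with the unit field `e_θ = (cos θ, sin θ)`, symmetry of the second
derivative turns the commutator `∂₋∂₊ − ∂₊∂₋` into the first-order operator `Df([e_β, e_α])`.
Since `D e_θ = Dθ ⊗ e_θ^⊥`, the bracket is `(∂₋α) e_α^⊥ − (∂₊β) e_β^⊥`, and in the frame
`(e_α, e_β)` one has `sin 2A · e_α^⊥ = cos 2A · e_α − e_β`, `sin 2A · e_β^⊥ = e_α − cos 2A · e_β`.
-/

open Real

noncomputable section

/-- Partial derivative in the `x` direction. -/
def pdx (f : ℝ × ℝ → ℝ) (p : ℝ × ℝ) : ℝ := fderiv ℝ f p (1, 0)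

/-- Partial derivative in the `y` direction. -/
def pdy (f : ℝ × ℝ → ℝ) (p : ℝ × ℝ) : ℝ := fderiv ℝ f p (0, 1)

/-- Directional derivative along the direction with angle `θ p`. -/
def dd (θ : ℝ × ℝ → ℝ) (f : ℝ × ℝ → ℝ) (p : ℝ × ℝ) : ℝ :=
  Real.cos (θ p) * pdx f p + Real.sin (θ p) * pdy f p

open VectorField

def unitVec (t : ℝ) : ℝ × ℝ := (cos t, sin t)

lemma dd_eq_fderiv_unitVec (θ f : ℝ × ℝ → ℝ) (p : ℝ × ℝ) :
    dd θ f p = fderiv ℝ f p (unitVec (θ p)) := by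
  have : unitVec (θ p) = cos (θ p) • ((1 : ℝ), (0 : ℝ)) + sin (θ p) • ((0 : ℝ), (1 : ℝ)) := by
    simp [unitVec]
  rw [this, map_add, map_smul, map_smul, dd, pdx, pdy, smul_eq_mul, smul_eq_mul]

lemma hasDerivAt_unitVec (t : ℝ) : HasDerivAt unitVec (-sin t, cos t) t :=
  (hasDerivAt_cos t).prodMk (hasDerivAt_sin t)

lemma fderiv_unitVec_comp_apply {θ : ℝ × ℝ → ℝ} {p : ℝ × ℝ} (hθ : DifferentiableAt ℝ θ p)
    (v : ℝ × ℝ) :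
    fderiv ℝ (unitVec ∘ θ) p v = fderiv ℝ θ p v • (-sin (θ p), cos (θ p)) := by
  rw [((hasDerivAt_unitVec (θ p)).hasFDerivAt.comp p hθ.hasFDerivAt).fderiv]
  simp

lemma sin_sub_smul_perp_left (a b : ℝ) :
    sin (a - b) • (-sin a, cos a) = cos (a - b) • unitVec a - unitVec b := by
  have := sin_sq_add_cos_sq a
  ext <;> simp only [unitVec, sin_sub, cos_sub, Prod.smul_fst, Prod.smul_snd, Prod.fst_sub,
    Prod.snd_sub, smul_eq_mul]
  · linear_combination (-cos b) * this
  · linear_combination (-sin b) * this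

lemma sin_sub_smul_perp_right (a b : ℝ) :
    sin (a - b) • (-sin b, cos b) = unitVec a - cos (a - b) • unitVec b := by
  have := sin_sq_add_cos_sq b
  ext <;> simp only [unitVec, sin_sub, cos_sub, Prod.smul_fst, Prod.smul_snd, Prod.fst_sub,
    Prod.snd_sub, smul_eq_mul]
  · linear_combination cos a * this
  · linear_combination sin a * this

lemma sin_sub_smul_lieBracket_unitVec {α β : ℝ × ℝ → ℝ} {p : ℝ × ℝ}
    (hα : DifferentiableAt ℝ α p) (hβ : DifferentiableAt ℝ β p) :
    sin (α p - β p) • lieBracket ℝ (unitVec ∘ β) (unitVec ∘ α) p =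
      (cos (α p - β p) * dd β α p - dd α β p) • unitVec (α p) +
        (cos (α p - β p) * dd α β p - dd β α p) • unitVec (β p) := by
  rw [lieBracket, fderiv_unitVec_comp_apply hα, fderiv_unitVec_comp_apply hβ, smul_sub,
    smul_comm _ (fderiv ℝ α p _), smul_comm _ (fderiv ℝ β p _), sin_sub_smul_perp_left,
    sin_sub_smul_perp_right, Function.comp_apply, Function.comp_apply, ← dd_eq_fderiv_unitVec,
    ← dd_eq_fderiv_unitVec]
  module

lemma dd_dd_sub_dd_dd_eq_fderiv_lieBracket {α β f : ℝ × ℝ → ℝ} {p : ℝ × ℝ}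
    (hα : DifferentiableAt ℝ α p) (hβ : DifferentiableAt ℝ β p) (hf : ContDiffAt ℝ 2 f p) :
    dd β (dd α f) p - dd α (dd β f) p =
      fderiv ℝ f p (lieBracket ℝ (unitVec ∘ β) (unitVec ∘ α) p) := by
  have hdd (θ : ℝ × ℝ → ℝ) : dd θ f = fun q ↦ fderiv ℝ f q (unitVec (θ q)) :=
    funext (dd_eq_fderiv_unitVec θ f)
  rw [fderiv_apply_lieBracket hf (by simp) ((hasDerivAt_unitVec _).differentiableAt.comp p hα)
    ((hasDerivAt_unitVec _).differentiableAt.comp p hβ), hdd, hdd, dd_eq_fderiv_unitVec,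
    dd_eq_fderiv_unitVec]
  rfl

/-- commutator relation between the characteristic derivatives
`∂₋` (angle `β`) and `∂₊` (angle `α`), with `2A = α − β`, applied to a C² function. -/
theorem stmt_9 (U : Set (ℝ × ℝ)) (hU : IsOpen U) (α β : ℝ × ℝ → ℝ)
    (hα : ContDiffOn ℝ 1 α U) (hβ : ContDiffOn ℝ 1 β U)
    (hsin : ∀ p ∈ U, Real.sin (α p - β p) ≠ 0)
    (f : ℝ × ℝ → ℝ) (hf : ContDiffOn ℝ 2 f U) :
    ∀ p ∈ U,
      dd β (dd α f) p - dd α (dd β f) p =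
        (1 / Real.sin (α p - β p)) *
          ((Real.cos (α p - β p) * dd α β p - dd β α p) * dd β f p -
           (dd α β p - Real.cos (α p - β p) * dd β α p) * dd α f p) := by
  intro p hp
  have hpU : U ∈ nhds p := hU.mem_nhds hp
  have hαp := (hα.contDiffAt hpU).differentiableAt one_ne_zero
  have hβp := (hβ.contDiffAt hpU).differentiableAt one_ne_zero
  have hbracket := congrArg (fderiv ℝ f p) (sin_sub_smul_lieBracket_unitVec hαp hβp)
  simp only [map_smul, map_add, smul_eq_mul, ← dd_eq_fderiv_unitVec] at hbracket
  rw [dd_dd_sub_dd_dd_eq_fderiv_lieBracket hαp hβp (hf.contDiffAt hpU)]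
  field_simp [hsin p hp]
  linear_combination hbracket

end
end

section
/- Let (u, v, ρ, s) be a C¹ supersonic solution of the smooth-flow 2D steady full Euler system on U, with flow angle σ, Mach angle A ∈ (0, π/2), and κ = 2/(γ−1). Then the divergence of the velocity satisfies uₓ + v_y = −(κ / sin A) ∂₀c on U. -/
open Real

noncomputable section

/-- Sound speed `c = √(γ s ρ^(γ-1))`. -/
def sound (γ : ℝ) (ρ s : ℝ × ℝ → ℝ) (p : ℝ × ℝ) : ℝ :=
  Real.sqrt (γ * s p * ρ p ^ (γ - 1))

/-- Flow speed `q = √(u² + v²)`. -/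
def speed (u v : ℝ × ℝ → ℝ) (p : ℝ × ℝ) : ℝ :=
  Real.sqrt (u p ^ 2 + v p ^ 2)

/-- Vorticity `ω = u_y − vₓ`. -/
def vort (u v : ℝ × ℝ → ℝ) (p : ℝ × ℝ) : ℝ := pdy u p - pdx v p


/-! The mass equation gives `ρ (uₓ + v_y) + q ∂₀ρ = 0`. Since `c² = γ s ρ^(γ-1)` and the entropy
equation gives `∂₀s = 0`, logarithmic differentiation yields `∂₀c = (γ - 1) c ∂₀ρ / (2ρ)`.
Eliminating `∂₀ρ` and using `sin A = c / q` gives the formula. -/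

section Derivatives

variable {f g : ℝ × ℝ → ℝ} {p : ℝ × ℝ}

theorem dd_eq_fderiv (θ f : ℝ × ℝ → ℝ) (p : ℝ × ℝ) :
    dd θ f p = fderiv ℝ f p (Real.cos (θ p), Real.sin (θ p)) := by
  have hdir : ((Real.cos (θ p), Real.sin (θ p)) : ℝ × ℝ) =
      Real.cos (θ p) • ((1, 0) : ℝ × ℝ) + Real.sin (θ p) • ((0, 1) : ℝ × ℝ) := by
    ext <;> simp
  rw [hdir, map_add, map_smul, map_smul, dd, pdx, pdy, smul_eq_mul, smul_eq_mul]

theorem pdx_mul (hf : DifferentiableAt ℝ f p) (hg : DifferentiableAt ℝ g p) :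
    pdx (fun q => f q * g q) p = f p * pdx g p + g p * pdx f p := by
  simp [pdx, fderiv_fun_mul hf hg]

theorem pdy_mul (hf : DifferentiableAt ℝ f p) (hg : DifferentiableAt ℝ g p) :
    pdy (fun q => f q * g q) p = f p * pdy g p + g p * pdy f p := by
  simp [pdy, fderiv_fun_mul hf hg]

theorem mul_pdx_add_mul_pdy_eq_mul_dd {a b r : ℝ} (θ : ℝ × ℝ → ℝ)
    (ha : a = r * Real.cos (θ p)) (hb : b = r * Real.sin (θ p)) :
    a * pdx f p + b * pdy f p = r * dd θ f p := by
  rw [ha, hb, dd]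
  ring

end Derivatives

section SoundSpeed

variable {γ : ℝ} {ρ s : ℝ × ℝ → ℝ} {p : ℝ × ℝ}

theorem sound_pos (hγ : 0 < γ) (hρ : 0 < ρ p) (hs : 0 < s p) : 0 < sound γ ρ s p :=
  Real.sqrt_pos.mpr (by positivity)

theorem hasFDerivAt_sound (hγ : 0 < γ) (hρ : 0 < ρ p) (hs : 0 < s p)
    (hρd : DifferentiableAt ℝ ρ p) (hsd : DifferentiableAt ℝ s p) :
    HasFDerivAt (sound γ ρ s)
      ((sound γ ρ s p / 2) • (((γ - 1) / ρ p) • fderiv ℝ ρ p + (s p)⁻¹ • fderiv ℝ s p)) p := by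
  have hc2 : 0 < γ * s p * ρ p ^ (γ - 1) := by positivity
  have hpow : HasFDerivAt (fun q => ρ q ^ (γ - 1))
      (((γ - 1) * ρ p ^ (γ - 1 - 1)) • fderiv ℝ ρ p) p :=
    hρd.hasFDerivAt.rpow_const (Or.inl hρ.ne')
  have hsq := (Real.hasDerivAt_sqrt hc2.ne').comp_hasFDerivAt p
    ((hsd.hasFDerivAt.const_mul γ).mul hpow)
  refine hsq.congr_fderiv ?_
  have hc : sound γ ρ s p ^ 2 = γ * s p * ρ p ^ (γ - 1) := Real.sq_sqrt hc2.le
  have hpow_sub : ρ p ^ (γ - 1 - 1) = ρ p ^ (γ - 1) / ρ p := Real.rpow_sub_one hρ.ne' _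
  refine ContinuousLinearMap.ext fun w => ?_
  simp only [FunLike.coe_smul, FunLike.coe_add, Pi.smul_apply, Pi.add_apply, smul_eq_mul]
  rw [hpow_sub, ← sound]
  field_simp [(sound_pos hγ hρ hs).ne']
  linear_combination -(ρ p * fderiv ℝ s p w + (γ - 1) * s p * fderiv ℝ ρ p w) * hc

theorem dd_sound (θ : ℝ × ℝ → ℝ) (hγ : 0 < γ) (hρ : 0 < ρ p) (hs : 0 < s p)
    (hρd : DifferentiableAt ℝ ρ p) (hsd : DifferentiableAt ℝ s p) :
    dd θ (sound γ ρ s) p =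
      sound γ ρ s p / 2 * ((γ - 1) / ρ p * dd θ ρ p + (s p)⁻¹ * dd θ s p) := by
  simp only [dd_eq_fderiv, (hasFDerivAt_sound hγ hρ hs hρd hsd).fderiv,
    FunLike.coe_smul, FunLike.coe_add, Pi.smul_apply, Pi.add_apply, smul_eq_mul]

end SoundSpeed

theorem stmt_13_general (γ : ℝ) (hγ : 1 < γ) (U : Set (ℝ × ℝ)) (hU : IsOpen U)
    (u v ρ s σ A : ℝ × ℝ → ℝ)
    (hu : ContDiffOn ℝ 1 u U) (hv : ContDiffOn ℝ 1 v U)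
    (hρ : ContDiffOn ℝ 1 ρ U) (hs : ContDiffOn ℝ 1 s U)
    (hρpos : ∀ p ∈ U, 0 < ρ p) (hspos : ∀ p ∈ U, 0 < s p)
    (hmass : ∀ p ∈ U, pdx (fun q => ρ q * u q) p + pdy (fun q => ρ q * v q) p = 0)
    (hent : ∀ p ∈ U, u p * pdx s p + v p * pdy s p = 0)
    (hsup : ∀ p ∈ U, (sound γ ρ s p) ^ 2 < u p ^ 2 + v p ^ 2)
    (huσ : ∀ p ∈ U, u p = speed u v p * Real.cos (σ p))
    (hvσ : ∀ p ∈ U, v p = speed u v p * Real.sin (σ p))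
    (hsinA : ∀ p ∈ U, Real.sin (A p) = sound γ ρ s p / speed u v p)
    :
    ∀ p ∈ U,
      pdx u p + pdy v p =
        -((2 / (γ - 1)) / Real.sin (A p)) * dd σ (sound γ ρ s) p := by
  intro p hp
  have hdiff : ∀ f : ℝ × ℝ → ℝ, ContDiffOn ℝ 1 f U → DifferentiableAt ℝ f p := fun f hf =>
    (hf.differentiableOn one_ne_zero).differentiableAt (hU.mem_nhds hp)
  have hγ0 : 0 < γ := by linarith
  have hc := sound_pos hγ0 (hρpos p hp) (hspos p hp)
  have hq : 0 < speed u v p := Real.sqrt_pos.mpr ((pow_pos hc 2).trans (hsup p hp))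
  have hmass_dd : ρ p * (pdx u p + pdy v p) + speed u v p * dd σ ρ p = 0 := by
    rw [← mul_pdx_add_mul_pdy_eq_mul_dd σ (huσ p hp) (hvσ p hp), ← hmass p hp,
      pdx_mul (hdiff ρ hρ) (hdiff u hu), pdy_mul (hdiff ρ hρ) (hdiff v hv)]
    ring
  have hent_dd : dd σ s p = 0 := by
    have h := hent p hp
    rw [mul_pdx_add_mul_pdy_eq_mul_dd σ (huσ p hp) (hvσ p hp)] at h
    exact (mul_eq_zero.mp h).resolve_left hq.ne'
  rw [dd_sound σ hγ0 (hρpos p hp) (hspos p hp) (hdiff ρ hρ) (hdiff s hs), hent_dd,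
    hsinA p hp]
  field_simp [hc.ne', hq.ne', (hρpos p hp).ne', sub_ne_zero.mpr hγ.ne']
  linear_combination (γ - 1) * hmass_dd

/-- the divergence of the velocity field satisfies
`uₓ + v_y = −(κ / sin A) ∂₀c`, with `κ = 2/(γ−1)`. -/
theorem stmt_13 (γ : ℝ) (hγ : 1 < γ) (U : Set (ℝ × ℝ)) (hU : IsOpen U)
    (u v ρ s σ A : ℝ × ℝ → ℝ)
    (hu : ContDiffOn ℝ 1 u U) (hv : ContDiffOn ℝ 1 v U)
    (hρ : ContDiffOn ℝ 1 ρ U) (hs : ContDiffOn ℝ 1 s U)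
    (hσ : ContDiffOn ℝ 1 σ U) (hA : ContDiffOn ℝ 1 A U)
    (hρpos : ∀ p ∈ U, 0 < ρ p) (hspos : ∀ p ∈ U, 0 < s p)
    (hmass : ∀ p ∈ U, pdx (fun q => ρ q * u q) p + pdy (fun q => ρ q * v q) p = 0)
    (hmomx : ∀ p ∈ U,
      u p * pdx u p + v p * pdy u p + (ρ p)⁻¹ * pdx (fun q => s q * ρ q ^ γ) p = 0)
    (hmomy : ∀ p ∈ U,
      u p * pdx v p + v p * pdy v p + (ρ p)⁻¹ * pdy (fun q => s q * ρ q ^ γ) p = 0)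
    (hent : ∀ p ∈ U, u p * pdx s p + v p * pdy s p = 0)
    (hsup : ∀ p ∈ U, (sound γ ρ s p) ^ 2 < u p ^ 2 + v p ^ 2)
    (huσ : ∀ p ∈ U, u p = speed u v p * Real.cos (σ p))
    (hvσ : ∀ p ∈ U, v p = speed u v p * Real.sin (σ p))
    (hsinA : ∀ p ∈ U, Real.sin (A p) = sound γ ρ s p / speed u v p)
    (hA0 : ∀ p ∈ U, 0 < A p) (hA2 : ∀ p ∈ U, A p < Real.pi / 2)
    :
    ∀ p ∈ U,
      pdx u p + pdy v p =
        -((2 / (γ - 1)) / Real.sin (A p)) * dd σ (sound γ ρ s) p :=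
  stmt_13_general γ hγ U hU u v ρ s σ A hu hv hρ hs hρpos hspos hmass hent hsup huσ hvσ hsinA
end
end
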